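/- arXiv:2405.03086 — 2 statements merged into one kernel-verified Lean document; each statement's English description precedes it below -/
import Mathlib

section
/- Let E, F ⊆ 𝔽_q^d. The number of pairs (x,y) ∈ E × F with x·y = 0 is at most |E||F|/q + q^(d/2)·√(|E||F|). -/
/-!
With a primitive additive character `ψ : 𝔽_q → ℂ` one has `q·[s = 0] = ∑ₜ ψ(t s)`, so the count `N`
satisfies `q·N - |E||A| = ∑_{y ∈ A} G y` where `G y = ∑_{x ∈ E, t ∈ 𝔽_qˣ} ψ((t x)·y)`.
Cauchy–Schwarz over `A`, then Plancherel over all of `𝔽_q^d`, bound the square of this by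
`|A| q^d · #{(x, t, x', t') : t x = t' x'}`, and the last count is at most `|E| (q - 1)²`
because `x'` is determined by `x, t, t'`.
-/

open Finset Matrix

lemma Fintype.sum_eq_add_sum_units {K M : Type*} [GroupWithZero K] [Fintype K] [DecidableEq K]
    [AddCommMonoid M] (f : K → M) : ∑ t, f t = f 0 + ∑ u : Kˣ, f u := by
  rw [← add_sum_erase _ f (mem_univ 0)]
  congr 1
  exact sum_nbij' (fun t => if h : t = 0 then 1 else Units.mk0 t h) (fun u => (u : K))
    (by simp) (by simp) (by simp +contextual) (by simp) (by simp +contextual)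

lemma AddChar.map_sum_eq_prod {A M ι : Type*} [AddCommMonoid A] [CommMonoid M] (ψ : AddChar A M)
    (s : Finset ι) (f : ι → A) : ψ (∑ i ∈ s, f i) = ∏ i ∈ s, ψ (f i) :=
  map_prod ψ.toMonoidHom (fun i => Multiplicative.ofAdd (f i)) s

lemma AddChar.sum_dotProduct_eq_ite {R R' ι : Type*} [CommRing R] [Fintype R] [DecidableEq R]
    [CommRing R'] [IsDomain R'] [Fintype ι] [DecidableEq ι] {ψ : AddChar R R'}
    (hψ : ψ.IsPrimitive) (v : ι → R) :
    ∑ y : ι → R, ψ (v ⬝ᵥ y) = if v = 0 then (Fintype.card R : R') ^ Fintype.card ι else 0 := by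
  simp_rw [dotProduct, AddChar.map_sum_eq_prod]
  rw [← Fintype.prod_sum (fun i a => ψ (v i * a))]
  simp_rw [mul_comm (v _), AddChar.sum_mulShift _ hψ]
  simp only [apply_ite (Nat.cast : ℕ → R'), Nat.cast_zero, Fintype.prod_ite_zero, prod_const,
    card_univ, funext_iff, Pi.zero_apply]

lemma AddChar.sum_norm_sq_sum_dotProduct {R ι S : Type*} [CommRing R] [Fintype R] [DecidableEq R]
    [Fintype ι] [DecidableEq ι] {ψ : AddChar R ℂ} (hψ : ψ.IsPrimitive)
    (s : Finset S) (w : S → ι → R) :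
    ∑ y : ι → R, ‖∑ i ∈ s, ψ (w i ⬝ᵥ y)‖ ^ 2
      = (Fintype.card R : ℝ) ^ Fintype.card ι * #{p ∈ s ×ˢ s | w p.1 = w p.2} := by
  apply Complex.ofReal_injective
  push_cast
  simp_rw [← Complex.mul_conj', map_sum, ← AddChar.map_neg_eq_conj, sum_mul_sum,
    ← AddChar.map_add_eq_mul, ← sub_eq_add_neg, ← sub_dotProduct]
  rw [sum_comm]
  simp_rw [sum_comm (s := univ), AddChar.sum_dotProduct_eq_ite hψ, sub_eq_zero]
  rw [← sum_product', sum_ite, sum_const_zero, add_zero, sum_const, nsmul_eq_mul, mul_comm]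

lemma Finset.card_filter_smul_eq_smul_le {G X : Type*} [Group G] [MulAction G X] [DecidableEq G]
    [DecidableEq X] (E : Finset X) (T : Finset G) :
    #{p ∈ (E ×ˢ T) ×ˢ (E ×ˢ T) | p.1.2 • p.1.1 = p.2.2 • p.2.1} ≤ #E * #T * #T := by
  rw [← card_product, ← card_product]
  refine card_le_card_of_injOn (fun p => (p.1, p.2.2)) (fun p hp => ?_) ?_
  · simp only [coe_filter, mem_product, Set.mem_ofPred_eq, coe_product, Set.mem_prod,
      mem_coe] at hp ⊢
    exact ⟨hp.1.1, hp.1.2.2⟩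
  · rintro ⟨⟨x, g⟩, ⟨x', g'⟩⟩ hp ⟨⟨y, h⟩, ⟨y', h'⟩⟩ hq heq
    simp only [coe_filter, Set.mem_ofPred_eq] at hp hq
    simp only [Prod.mk.injEq] at heq
    obtain ⟨⟨rfl, rfl⟩, rfl⟩ := heq
    have : x' = y' := by rw [← inv_smul_smul g' x', ← hp.2, hq.2, inv_smul_smul]
    simp [this]

section
variable {F ι : Type*} [Field F] [Fintype F] [DecidableEq F] [Fintype ι]

lemma AddChar.card_mul_card_filter_dotProduct_eq {ψ : AddChar F ℂ} (hψ : ψ.IsPrimitive)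
    (E A : Finset (ι → F)) :
    (Fintype.card F : ℂ) * #{p ∈ E ×ˢ A | p.1 ⬝ᵥ p.2 = 0}
      = #E * #A + ∑ y ∈ A, ∑ p ∈ E ×ˢ (univ : Finset Fˣ), ψ ((p.2 • p.1) ⬝ᵥ y) := by
  rw [card_filter, Nat.cast_sum, mul_sum]
  have hcount (s : F) : (Fintype.card F : ℂ) * ((if s = 0 then 1 else 0 : ℕ) : ℂ)
      = 1 + ∑ u : Fˣ, ψ (u * s) := by
    have := Fintype.sum_eq_add_sum_units fun t => ψ (t * s)
    rw [AddChar.sum_mulShift _ hψ, zero_mul, AddChar.map_zero_eq_one] at this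
    rw [← this]
    split_ifs <;> simp
  rw [sum_congr rfl fun p _ => hcount (p.1 ⬝ᵥ p.2), sum_add_distrib, sum_const, card_product,
    nsmul_one, Nat.cast_mul, sum_product, sum_comm]
  simp_rw [sum_product, Units.smul_def, smul_dotProduct, smul_eq_mul]

lemma sq_card_mul_card_filter_dotProduct_sub_le [DecidableEq ι] (E A : Finset (ι → F)) :
    ((Fintype.card F : ℝ) * #{p ∈ E ×ˢ A | p.1 ⬝ᵥ p.2 = 0} - #E * #A) ^ 2
      ≤ (Fintype.card F - 1) ^ 2 * Fintype.card F ^ Fintype.card ι * #E * #A := by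
  set ψ := AddChar.FiniteField.primitiveChar_to_Complex F
  have hψ : ψ.IsPrimitive := AddChar.FiniteField.primitiveChar_to_Complex_isPrimitive F
  set G : (ι → F) → ℂ := fun y => ∑ p ∈ E ×ˢ (univ : Finset Fˣ), ψ ((p.2 • p.1) ⬝ᵥ y)
  have hG : (((Fintype.card F : ℝ) * #{p ∈ E ×ˢ A | p.1 ⬝ᵥ p.2 = 0} - #E * #A : ℝ) : ℂ)
      = ∑ y ∈ A, G y := by
    push_cast
    rw [AddChar.card_mul_card_filter_dotProduct_eq hψ, add_sub_cancel_left]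
  have hcard_units : (Fintype.card Fˣ : ℝ) = Fintype.card F - 1 := by
    rw [Fintype.card_units, Nat.cast_sub Fintype.card_pos, Nat.cast_one]
  calc _ = ‖∑ y ∈ A, G y‖ ^ 2 := by rw [← hG, Complex.norm_real, Real.norm_eq_abs, sq_abs]
    _ ≤ (∑ y ∈ A, ‖G y‖) ^ 2 := by gcongr; exact norm_sum_le _ _
    _ ≤ #A * ∑ y ∈ A, ‖G y‖ ^ 2 := sq_sum_le_card_mul_sum_sq
    _ ≤ #A * ∑ y, ‖G y‖ ^ 2 := by gcongr; exact subset_univ A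
    _ = #A * (Fintype.card F ^ Fintype.card ι *
          #{p ∈ (E ×ˢ univ) ×ˢ (E ×ˢ univ) | p.1.2 • p.1.1 = p.2.2 • p.2.1}) := by
      rw [AddChar.sum_norm_sq_sum_dotProduct hψ]
    _ ≤ #A * (Fintype.card F ^ Fintype.card ι * (#E * Fintype.card Fˣ * Fintype.card Fˣ)) := by
      have := card_filter_smul_eq_smul_le E (univ : Finset Fˣ)
      rw [card_univ] at this
      gcongr
      exact_mod_cast this
    _ = _ := by rw [hcard_units]; ring

end

theorem stmt_3 (F : Type) [Field F] [Fintype F] [DecidableEq F] (d : ℕ)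
    (E A : Finset (Fin d → F)) :
    (((E ×ˢ A).filter (fun p => ∑ i, p.1 i * p.2 i = 0)).card : ℝ)
      ≤ (E.card : ℝ) * A.card / Fintype.card F
        + (Fintype.card F : ℝ) ^ ((d : ℝ) / 2) * Real.sqrt ((E.card : ℝ) * A.card) := by
  change ((#{p ∈ E ×ˢ A | p.1 ⬝ᵥ p.2 = 0} : ℕ) : ℝ) ≤ _
  set q : ℝ := (Fintype.card F : ℝ)
  have hq1 : 1 ≤ q := Nat.one_le_cast.mpr Fintype.card_pos
  have hq : 0 < q := by linarith
  have hbound := sq_card_mul_card_filter_dotProduct_sub_le E A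
  rw [Fintype.card_fin] at hbound
  have hpow : q ^ ((d : ℝ) / 2) = √(q ^ d) := by
    rw [Real.sqrt_eq_rpow, ← Real.rpow_natCast, ← Real.rpow_mul hq.le]
    ring_nf
  have key : q * #{p ∈ E ×ˢ A | p.1 ⬝ᵥ p.2 = 0} - #E * #A
      ≤ q * (q ^ ((d : ℝ) / 2) * √(#E * #A)) :=
    calc _ ≤ √((q - 1) ^ 2 * q ^ d * #E * #A) := (le_abs_self _).trans (Real.abs_le_sqrt hbound)
      _ ≤ √(q ^ 2 * q ^ d * (#E * #A)) := by
        rw [mul_assoc _ (#E : ℝ)]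
        gcongr; linarith
      _ = _ := by
        rw [Real.sqrt_mul (by positivity), Real.sqrt_mul (by positivity), Real.sqrt_sq hq.le,
          hpow, mul_assoc]
  rw [div_add' _ _ _ hq.ne', le_div_iff₀ hq]
  linarith
end

section
/- Let d ≥ 4 and E ⊆ 𝔽_q^d with |E| ≥ C·q^((d+2)/2) for a sufficiently large constant C. Then the number of pairs (x,y) ∈ E × E with x·y = 0 is at most 2|E|²/q. -/
/-!
Fix a nontrivial additive character `ψ` of `𝔽_q`. Orthogonality, `∑ t, ψ (t * a) = q * [a = 0]`,
gives `q * N = ∑ t, ∑ x ∈ A, ∑ y ∈ B, ψ (t * x ⬝ᵥ y)`. The term `t = 0` is `|A| |B|`. For `t ≠ 0`,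
Cauchy–Schwarz in `x`, followed by extending the sum over `x` to all of `𝔽_q^d` and expanding the
square, bounds the term by `√(|A| |B| q^d)`. With `A = B = E` and `|E| ≥ q^((d+2)/2)` the error
`|E| q^(d/2)` is at most `|E|² / q`.
-/

open Finset

namespace AddChar

lemma map_sum_eq_prod_s14 {ι A M : Type*} [AddCommMonoid A] [CommMonoid M] (ψ : AddChar A M)
    (s : Finset ι) (f : ι → A) : ψ (∑ i ∈ s, f i) = ∏ i ∈ s, ψ (f i) := by
  induction s using Finset.cons_induction with
  | empty => simp
  | cons i s hi ih => rw [sum_cons, prod_cons, map_add_eq_mul, ih]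

lemma IsPrimitive.mulShift {F M : Type*} [Field F] [CommMonoid M] {ψ : AddChar F M}
    (hψ : ψ.IsPrimitive) {t : F} (ht : t ≠ 0) : (ψ.mulShift t).IsPrimitive :=
  .of_ne_one (hψ ht)

variable {R : Type*} [CommRing R] [Fintype R] [DecidableEq R] {ι : Type*} [Fintype ι]

section Domain

variable {R' : Type*} [CommRing R'] [IsDomain R'] {ψ : AddChar R R'}

lemma card_mul_card_filter_dotProduct_eq_zero (hψ : ψ.IsPrimitive) (A B : Finset (ι → R)) :
    (Fintype.card R : R') * #{p ∈ A ×ˢ B | p.1 ⬝ᵥ p.2 = 0} =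
      ∑ t : R, ∑ x ∈ A, ∑ y ∈ B, ψ (t * x ⬝ᵥ y) := by
  simp only [← sum_product' A B, sum_comm (s := univ), sum_mulShift _ hψ, Nat.cast_ite,
    Nat.cast_zero, sum_ite, sum_const_zero, add_zero, sum_const, nsmul_eq_mul, mul_comm]

variable [DecidableEq ι]

lemma sum_dotProduct_eq_ite_s14 (hψ : ψ.IsPrimitive) (w : ι → R) :
    ∑ x : ι → R, ψ (x ⬝ᵥ w) = if w = 0 then (Fintype.card R : R') ^ Fintype.card ι else 0 := by
  have hprod : ∑ x : ι → R, ψ (x ⬝ᵥ w) = ∏ i, ∑ t : R, ψ (t * w i) := by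
    simp only [dotProduct, map_sum_eq_prod_s14, Fintype.prod_sum]
  rw [hprod]
  split_ifs with hw
  · simp [hw]
  · obtain ⟨i, hi⟩ := Function.ne_iff.1 hw
    exact prod_eq_zero (mem_univ i) (by simp [sum_mulShift _ hψ, show w i ≠ 0 from hi])

end Domain

variable [DecidableEq ι] {ψ : AddChar R ℂ}

lemma sum_norm_sq_sum_dotProduct_s14 (hψ : ψ.IsPrimitive) (B : Finset (ι → R)) :
    ∑ x : ι → R, ‖∑ y ∈ B, ψ (x ⬝ᵥ y)‖ ^ 2 = #B * (Fintype.card R : ℝ) ^ Fintype.card ι := by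
  have hexpand (x : ι → R) : (‖∑ y ∈ B, ψ (x ⬝ᵥ y)‖ : ℂ) ^ 2 =
      ∑ y ∈ B, ∑ y' ∈ B, ψ (x ⬝ᵥ (y - y')) := by
    rw [← Complex.mul_conj', map_sum, sum_mul_sum]
    refine sum_congr rfl fun y _ => sum_congr rfl fun y' _ => ?_
    rw [← map_neg_eq_conj, ← map_add_eq_mul, dotProduct_sub, sub_eq_add_neg]
  have hsum (y y' : ι → R) : ∑ x : ι → R, ψ (x ⬝ᵥ (y - y')) =
      if y = y' then (Fintype.card R : ℂ) ^ Fintype.card ι else 0 := by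
    simp only [sum_dotProduct_eq_ite_s14 hψ, sub_eq_zero]
  apply Complex.ofReal_injective
  push_cast
  simp only [hexpand]
  rw [sum_comm]
  refine (sum_congr rfl fun y _ => sum_comm).trans ?_
  simp only [hsum, sum_ite_eq, sum_ite_mem, inter_self, sum_const, nsmul_eq_mul]

lemma norm_sum_sum_dotProduct_sq_le (hψ : ψ.IsPrimitive) (A B : Finset (ι → R)) :
    ‖∑ x ∈ A, ∑ y ∈ B, ψ (x ⬝ᵥ y)‖ ^ 2 ≤ #A * #B * (Fintype.card R : ℝ) ^ Fintype.card ι := by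
  calc ‖∑ x ∈ A, ∑ y ∈ B, ψ (x ⬝ᵥ y)‖ ^ 2
      ≤ (∑ x ∈ A, ‖∑ y ∈ B, ψ (x ⬝ᵥ y)‖) ^ 2 := by gcongr; exact norm_sum_le _ _
    _ ≤ #A * ∑ x ∈ A, ‖∑ y ∈ B, ψ (x ⬝ᵥ y)‖ ^ 2 := sq_sum_le_card_mul_sum_sq
    _ ≤ #A * ∑ x : ι → R, ‖∑ y ∈ B, ψ (x ⬝ᵥ y)‖ ^ 2 := by
        gcongr
        exact subset_univ A
    _ = #A * #B * (Fintype.card R : ℝ) ^ Fintype.card ι := by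
        rw [sum_norm_sq_sum_dotProduct_s14 hψ, mul_assoc]

end AddChar

open AddChar

theorem card_filter_dotProduct_eq_zero_le {F : Type*} [Field F] [Fintype F] [DecidableEq F]
    {ι : Type*} [Fintype ι] [DecidableEq ι] (A B : Finset (ι → F)) :
    (#{p ∈ A ×ˢ B | p.1 ⬝ᵥ p.2 = 0} : ℝ) ≤
      #A * #B / Fintype.card F + √(#A * #B * (Fintype.card F : ℝ) ^ Fintype.card ι) := by
  obtain ⟨ψ, hψ⟩ := exists_apply_ne_zero.2 (one_ne_zero : (1 : F) ≠ 0)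
  have hprim : ψ.IsPrimitive := .of_ne_one fun h => hψ (by simp [h])
  set M := √(#A * #B * (Fintype.card F : ℝ) ^ Fintype.card ι)
  set S : F → ℂ := fun t => ∑ x ∈ A, ∑ y ∈ B, ψ (t * x ⬝ᵥ y)
  have hS (t : F) (ht : t ≠ 0) : ‖S t‖ ≤ M := by
    rw [Real.le_sqrt (norm_nonneg _) (by positivity)]
    simpa using norm_sum_sum_dotProduct_sq_le (hprim.mulShift ht) A B
  have hcount : (Fintype.card F : ℂ) * #{p ∈ A ×ˢ B | p.1 ⬝ᵥ p.2 = 0} - #A * #B =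
      ∑ t ∈ univ.erase 0, S t := by
    rw [card_mul_card_filter_dotProduct_eq_zero hprim, ← add_sum_erase _ _ (mem_univ 0)]
    simp [S]
  have herror : ‖∑ t ∈ univ.erase 0, S t‖ ≤ Fintype.card F * M := by
    calc ‖∑ t ∈ univ.erase 0, S t‖ ≤ ∑ t ∈ univ.erase 0, M :=
          norm_sum_le_of_le _ fun t ht => hS t (ne_of_mem_erase ht)
      _ ≤ Fintype.card F * M := by
          rw [sum_const, nsmul_eq_mul]
          gcongr
          exact_mod_cast card_le_univ _
  have hq : (0 : ℝ) < Fintype.card F := by positivity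
  have hmain : (Fintype.card F : ℝ) * #{p ∈ A ×ˢ B | p.1 ⬝ᵥ p.2 = 0} - #A * #B ≤
      Fintype.card F * M := by
    calc (Fintype.card F : ℝ) * #{p ∈ A ×ˢ B | p.1 ⬝ᵥ p.2 = 0} - #A * #B
        = ((Fintype.card F : ℂ) * #{p ∈ A ×ˢ B | p.1 ⬝ᵥ p.2 = 0} - #A * #B).re := by simp
      _ ≤ ‖∑ t ∈ univ.erase 0, S t‖ := hcount ▸ Complex.re_le_norm _
      _ ≤ Fintype.card F * M := herror
  rw [div_add' _ _ _ hq.ne', le_div_iff₀ hq]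
  linarith

theorem stmt_14 :
    ∃ C : ℝ, 0 < C ∧
      ∀ (F : Type) [Field F] [Fintype F] [DecidableEq F] (d : ℕ), 4 ≤ d →
        ∀ (E : Finset (Fin d → F)),
        (E.card : ℝ) ≥ C * (Fintype.card F : ℝ) ^ (((d : ℝ) + 2) / 2) →
        (((E ×ˢ E).filter (fun p => (∑ i, p.1 i * p.2 i) = 0)).card : ℝ)
          ≤ 2 * (E.card : ℝ) ^ 2 / Fintype.card F := by
  refine ⟨1, one_pos, fun F _ _ _ d _ E hE => ?_⟩
  set q : ℝ := (Fintype.card F : ℝ)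
  have hq : 0 < q := by positivity
  have hpow : q ^ (((d : ℝ) + 2) / 2) = q * √(q ^ d) := by
    rw [Real.sqrt_eq_rpow, ← Real.rpow_natCast, ← Real.rpow_mul hq.le, add_div,
      div_self two_ne_zero, Real.rpow_add hq, Real.rpow_one, mul_comm, mul_one_div]
  have hsqrt : √(#E * #E * q ^ d) ≤ #E * #E / q := by
    have hE' : q * √(q ^ d) ≤ #E := by rw [← hpow]; linarith
    rw [Real.sqrt_mul' _ (by positivity), Real.sqrt_mul_self (Nat.cast_nonneg _), le_div_iff₀ hq]
    calc #E * √(q ^ d) * q = #E * (q * √(q ^ d)) := by ring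
      _ ≤ #E * #E := by gcongr
  calc (((E ×ˢ E).filter (fun p => (∑ i, p.1 i * p.2 i) = 0)).card : ℝ)
      ≤ #E * #E / q + √(#E * #E * q ^ d) := by
        have key := card_filter_dotProduct_eq_zero_le E E
        rwa [Fintype.card_fin] at key
    _ ≤ #E * #E / q + #E * #E / q := by gcongr
    _ = 2 * #E ^ 2 / q := by ring
end
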